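/- arXiv:1812.10038 — 6 statements merged into one kernel-verified Lean document; each statement's English description precedes it below -/
import Mathlib

section
/- Let m₁ > 1, m₂ < 0 and κ ∈ (0,1). Define f(w) = (m₁−1)m₂(1−w^{1−m₂})(w^{m₁}−κ) − m₁(m₂−1)(w^{m₁}−w)(1−κw^{−m₂}) for w ∈ (0,1). Then f(w) < 0 for all w ∈ (κ, 1). -/
/-! With `P = w ^ m₁ < w` and `Q = w ^ (-m₂) ∈ (0, 1)` the claim reads
`A (1 - w Q) (κ - P) < B (1 - κ Q) (w - P)` with `A = (m₁ - 1)(-m₂)` and `B = m₁ (1 - m₂)`,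
and each factor on the left is dominated by the corresponding factor on the right:
`0 < A < B`, `0 < 1 - w Q < 1 - κ Q` and `κ - P < w - P`. -/

theorem mul_mul_lt_mul_mul {α : Type*} [Field α] [LinearOrder α] [IsStrictOrderedRing α]
    {a b u u' v v' : α} (ha : 0 ≤ a) (hab : a ≤ b) (hb : 0 < b) (hu : 0 ≤ u) (huu' : u ≤ u')
    (hu' : 0 < u') (hvv' : v < v') (hv' : 0 < v') : a * u * v < b * u' * v' := by
  have hbu' : 0 < b * u' := mul_pos hb hu'
  rcases le_or_gt v 0 with hv | hv
  · calc a * u * v ≤ 0 := mul_nonpos_of_nonneg_of_nonpos (mul_nonneg ha hu) hv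
      _ < b * u' * v' := mul_pos hbu' hv'
  · calc a * u * v ≤ b * u' * v := by gcongr
      _ < b * u' * v' := mul_lt_mul_of_pos_left hvv' hbu'

theorem stmt_1 (m₁ m₂ κ : ℝ) (hm₁ : 1 < m₁) (hm₂ : m₂ < 0)
    (hκ : κ ∈ Set.Ioo (0:ℝ) 1) :
    ∀ w ∈ Set.Ioo κ 1,
      (m₁ - 1) * m₂ * (1 - w ^ (1 - m₂)) * (w ^ m₁ - κ)
        - m₁ * (m₂ - 1) * (w ^ m₁ - w) * (1 - κ * w ^ (-m₂)) < 0 := by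
  rintro w ⟨hκw, hw1⟩
  have hw0 : 0 < w := hκ.1.trans hκw
  have hP : w ^ m₁ < w := Real.rpow_lt_self_of_lt_one hw0 hw1 hm₁
  have hQ0 : 0 < w ^ (-m₂) := Real.rpow_pos_of_pos hw0 _
  have hQ1 : w ^ (-m₂) < 1 := Real.rpow_lt_one hw0.le hw1 (neg_pos.mpr hm₂)
  have hwQ : w ^ (1 - m₂) = w * w ^ (-m₂) := by
    rw [sub_eq_add_neg, Real.rpow_add hw0, Real.rpow_one]
  have key : (m₁ - 1) * (-m₂) * (1 - w * w ^ (-m₂)) * (κ - w ^ m₁)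
      < m₁ * (1 - m₂) * (1 - κ * w ^ (-m₂)) * (w - w ^ m₁) :=
    mul_mul_lt_mul_mul (by nlinarith) (by nlinarith) (by nlinarith) (by nlinarith)
      (by nlinarith) (by nlinarith) (by linarith) (by linarith)
  rw [hwQ]
  linarith
end

section
/- Let m₁ > 1, m₂ < 0 and κ ∈ (0,1), and define f(w) = (m₁−1)m₂(1−w^{1−m₂})(w^{m₁}−κ) − m₁(m₂−1)(w^{m₁}−w)(1−κw^{−m₂}). Then lim_{w→0⁺} f(w) = −(m₁−1)m₂κ > 0 and f(κ) = (m₁−m₂)(1−κ^{1−m₂})(κ^{m₁}−κ) < 0; consequently f has a zero in the open interval (0, κ). -/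
/-!
Since `m₁ > 0` and `-m₂ > 0`, every power of `w` in `f` tends to `0` as `w → 0⁺`, so `f` extends
continuously to `0` with value `-(m₁ - 1) m₂ κ > 0`. At `w = κ` the factor `1 - κ w^{-m₂}` becomes
`1 - κ^{1-m₂}`, so `f κ` collapses to `(m₁ - m₂)(1 - κ^{1-m₂})(κ^{m₁} - κ)`, which is negative.
The intermediate value theorem then gives a zero in `(0, κ)`.
-/

open Filter Set Topology

/-- The function `f` of the statement. -/
noncomputable def crossingFn (m₁ m₂ κ w : ℝ) : ℝ :=
  (m₁ - 1) * m₂ * (1 - w ^ (1 - m₂)) * (w ^ m₁ - κ)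
    - m₁ * (m₂ - 1) * (w ^ m₁ - w) * (1 - κ * w ^ (-m₂))

theorem exists_mem_Ioo_eq_zero_of_tendsto_nhdsGT {g : ℝ → ℝ} {a b L : ℝ} (hab : a < b)
    (hg : ContinuousOn g (Ioc a b)) (hlim : Tendsto g (𝓝[>] a) (𝓝 L)) (hL : 0 < L)
    (hb : g b < 0) : ∃ w ∈ Ioo a b, g w = 0 := by
  obtain ⟨w₀, hgw₀, hw₀⟩ :=
    ((hlim.eventually (eventually_gt_nhds hL)).and (Ioo_mem_nhdsGT hab)).exists
  have hcont : ContinuousOn g (Icc w₀ b) :=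
    hg.mono fun x hx => ⟨hw₀.1.trans_le hx.1, hx.2⟩
  obtain ⟨c, hc, hgc⟩ := intermediate_value_Ioo' hw₀.2.le hcont ⟨hb, hgw₀⟩
  exact ⟨c, ⟨hw₀.1.trans hc.1, hc.2⟩, hgc⟩

section

variable {m₁ m₂ κ : ℝ}

theorem continuous_crossingFn (hm₁ : 0 ≤ m₁) (hm₂ : m₂ ≤ 0) :
    Continuous (crossingFn m₁ m₂ κ) := by
  have hw₁ : Continuous fun w : ℝ => w ^ m₁ := Real.continuous_rpow_const hm₁
  have hw₂ : Continuous fun w : ℝ => w ^ (1 - m₂) := Real.continuous_rpow_const (by linarith)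
  have hw₃ : Continuous fun w : ℝ => w ^ (-m₂) := Real.continuous_rpow_const (by linarith)
  unfold crossingFn
  fun_prop

theorem crossingFn_zero (hm₁ : m₁ ≠ 0) (hm₂ : m₂ < 0) :
    crossingFn m₁ m₂ κ 0 = -((m₁ - 1) * m₂ * κ) := by
  simp only [crossingFn, Real.zero_rpow hm₁, Real.zero_rpow (by linarith : 1 - m₂ ≠ 0),
    Real.zero_rpow (by linarith : -m₂ ≠ 0)]
  ring

theorem tendsto_crossingFn_nhdsGT_zero (hm₁ : 0 < m₁) (hm₂ : m₂ < 0) :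
    Tendsto (crossingFn m₁ m₂ κ) (𝓝[>] 0) (𝓝 (-((m₁ - 1) * m₂ * κ))) := by
  rw [← crossingFn_zero hm₁.ne' hm₂]
  exact ((continuous_crossingFn hm₁.le hm₂.le).tendsto 0).mono_left nhdsWithin_le_nhds

theorem crossingFn_self (hκ : 0 < κ) :
    crossingFn m₁ m₂ κ κ = (m₁ - m₂) * (1 - κ ^ (1 - m₂)) * (κ ^ m₁ - κ) := by
  have hpow : κ * κ ^ (-m₂) = κ ^ (1 - m₂) := by
    rw [sub_eq_add_neg, Real.rpow_add hκ, Real.rpow_one]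
  simp only [crossingFn, hpow]
  ring

theorem crossingFn_self_neg (hm₁ : 1 < m₁) (hm₂ : m₂ < 0) (hκ0 : 0 < κ) (hκ1 : κ < 1) :
    (m₁ - m₂) * (1 - κ ^ (1 - m₂)) * (κ ^ m₁ - κ) < 0 := by
  have hpow₂ : κ ^ (1 - m₂) < 1 := Real.rpow_lt_one hκ0.le hκ1 (by linarith)
  have hpow₁ : κ ^ m₁ < κ := by
    simpa only [Real.rpow_one] using Real.rpow_lt_rpow_of_exponent_gt hκ0 hκ1 hm₁
  exact mul_neg_of_pos_of_neg (mul_pos (by linarith) (by linarith)) (by linarith)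

end

theorem stmt_2 (m₁ m₂ κ : ℝ) (hm₁ : 1 < m₁) (hm₂ : m₂ < 0)
    (hκ0 : 0 < κ) (hκ1 : κ < 1) :
    Filter.Tendsto (fun w : ℝ =>
        (m₁ - 1) * m₂ * (1 - w ^ (1 - m₂)) * (w ^ m₁ - κ)
          - m₁ * (m₂ - 1) * (w ^ m₁ - w) * (1 - κ * w ^ (-m₂)))
      (nhdsWithin 0 (Set.Ioi 0)) (nhds (-((m₁ - 1) * m₂ * κ)))
    ∧ 0 < -((m₁ - 1) * m₂ * κ)
    ∧ (m₁ - 1) * m₂ * (1 - κ ^ (1 - m₂)) * (κ ^ m₁ - κ)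
        - m₁ * (m₂ - 1) * (κ ^ m₁ - κ) * (1 - κ * κ ^ (-m₂))
        = (m₁ - m₂) * (1 - κ ^ (1 - m₂)) * (κ ^ m₁ - κ)
    ∧ (m₁ - m₂) * (1 - κ ^ (1 - m₂)) * (κ ^ m₁ - κ) < 0
    ∧ ∃ w ∈ Set.Ioo 0 κ,
        (m₁ - 1) * m₂ * (1 - w ^ (1 - m₂)) * (w ^ m₁ - κ)
          - m₁ * (m₂ - 1) * (w ^ m₁ - w) * (1 - κ * w ^ (-m₂)) = 0 := by
  have hlim : Tendsto (crossingFn m₁ m₂ κ) (𝓝[>] 0) (𝓝 (-((m₁ - 1) * m₂ * κ))) :=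
    tendsto_crossingFn_nhdsGT_zero (by linarith) hm₂
  have hpos : 0 < -((m₁ - 1) * m₂ * κ) := by
    have : 0 < (m₁ - 1) * -m₂ * κ := by have := neg_pos.2 hm₂; positivity
    linarith
  have hself : crossingFn m₁ m₂ κ κ = (m₁ - m₂) * (1 - κ ^ (1 - m₂)) * (κ ^ m₁ - κ) :=
    crossingFn_self hκ0
  have hneg := crossingFn_self_neg hm₁ hm₂ hκ0 hκ1
  refine ⟨hlim, hpos, hself, hneg, ?_⟩
  exact exists_mem_Ioo_eq_zero_of_tendsto_nhdsGT hκ0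
    (continuous_crossingFn (by linarith) hm₂.le).continuousOn hlim hpos (hself.trans_lt hneg)
end

section
/- Let m₂ < 0 and κ ∈ (0,1). Define f₁(w) = 1 − m₂w^{1−m₂} + (m₂−1)κw^{−m₂} for w ∈ (0, κ). Then f₁ is strictly decreasing on (0, κ) and f₁(w) > 1 − κ^{1−m₂} > 0 for all w ∈ (0, κ). -/
/-
f₁ has derivative (-m₂)(1 - m₂) w^(-m₂-1) (w - κ), negative on (0, κ), so f₁ strictly decreases on
(0, κ] and stays above its value f₁(κ) = 1 - κ^(1-m₂) at the right end point; that value is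
positive because 1 - m₂ > 0 and κ < 1.
-/

open Set

noncomputable def f₁ (m κ w : ℝ) : ℝ := 1 - m * w ^ (1 - m) + (m - 1) * κ * w ^ (-m)

lemma hasDerivAt_f₁ (m κ : ℝ) {w : ℝ} (hw : w ≠ 0) :
    HasDerivAt (f₁ m κ) (-m * (1 - m) * w ^ (-m - 1) * (w - κ)) w := by
  have h₁ : HasDerivAt (fun w : ℝ => w ^ (1 - m)) ((1 - m) * w ^ (1 - m - 1)) w :=
    Real.hasDerivAt_rpow_const (Or.inl hw)
  have h₂ : HasDerivAt (fun w : ℝ => w ^ (-m)) (-m * w ^ (-m - 1)) w :=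
    Real.hasDerivAt_rpow_const (Or.inl hw)
  refine (((h₁.const_mul m).const_sub 1).add (h₂.const_mul ((m - 1) * κ))).congr_deriv ?_
  rw [show 1 - m - 1 = -m by ring, show w ^ (-m) = w ^ (-m - 1) * w by
    rw [← Real.rpow_add_one hw]; ring_nf]
  ring

lemma strictAntiOn_f₁ {m : ℝ} (hm : m < 0) (κ : ℝ) : StrictAntiOn (f₁ m κ) (Ioc 0 κ) := by
  refine strictAntiOn_of_deriv_neg (convex_Ioc 0 κ)
    (fun w hw => (hasDerivAt_f₁ m κ hw.1.ne').continuousAt.continuousWithinAt) ?_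
  intro w hw
  rw [interior_Ioc] at hw
  rw [(hasDerivAt_f₁ m κ hw.1.ne').deriv]
  have hcoeff : 0 < -m * (1 - m) * w ^ (-m - 1) :=
    mul_pos (mul_pos (by linarith) (by linarith)) (Real.rpow_pos_of_pos hw.1 _)
  exact mul_neg_of_pos_of_neg hcoeff (by linarith [hw.2])

lemma f₁_self (m : ℝ) {κ : ℝ} (hκ : κ ≠ 0) : f₁ m κ κ = 1 - κ ^ (1 - m) := by
  rw [f₁, show κ ^ (1 - m) = κ ^ (-m) * κ by rw [← Real.rpow_add_one hκ]; ring_nf]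
  ring

theorem stmt_4 (m₂ κ : ℝ) (hm₂ : m₂ < 0) (hκ : κ ∈ Set.Ioo (0:ℝ) 1) :
    StrictAntiOn (fun w : ℝ => 1 - m₂ * w ^ (1 - m₂) + (m₂ - 1) * κ * w ^ (-m₂))
      (Set.Ioo 0 κ)
    ∧ (∀ w ∈ Set.Ioo (0:ℝ) κ,
        1 - κ ^ (1 - m₂) < 1 - m₂ * w ^ (1 - m₂) + (m₂ - 1) * κ * w ^ (-m₂))
    ∧ 0 < 1 - κ ^ (1 - m₂) := by
  obtain ⟨hκ₀, hκ₁⟩ := hκ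
  have hanti := strictAntiOn_f₁ hm₂ κ
  refine ⟨hanti.mono Ioo_subset_Ioc_self, fun w hw => ?_, ?_⟩
  · rw [← f₁_self m₂ hκ₀.ne']
    exact hanti ⟨hw.1, hw.2.le⟩ ⟨hκ₀, le_rfl⟩ hw.2
  · linarith [Real.rpow_lt_one hκ₀.le hκ₁ (by linarith : 0 < 1 - m₂)]
end

section
/- Let m₁ > 1, m₂ < 0, κ ∈ (0,1). Then the function f(w) = (m₁−1)m₂(1−w^{1−m₂})(w^{m₁}−κ) − m₁(m₂−1)(w^{m₁}−w)(1−κw^{−m₂}) has exactly one zero in (0,1), and this zero lies in (0, κ). -/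
/-!
On `[κ, 1)` the two products in `F` have signs forcing `F < 0`, so every zero lies in `(0, κ)`.
On `[0, κ]`, multiplying out writes `F` as a sum of six terms `c * w ^ p` with `p ≥ 0`; it is
positive at `0`, negative at `κ`, and strictly convex: its second derivative is
`(m₁ - m₂) w ^ (m₁ - m₂ - 2)` times a quantity that the tangent-line bounds
`w ^ p ≥ 1 + p (w - 1)` (for `p ≤ 0`) make positive when `w < κ`. A strictly convex function that
is negative at the right end of an interval has at most one zero there, and the intermediate value
theorem supplies one.
-/

open Set

noncomputable def rpowSum (l : List (ℝ × ℝ)) (w : ℝ) : ℝ :=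
  (l.map fun t => t.1 * w ^ t.2).sum

def rpowSumDeriv (l : List (ℝ × ℝ)) : List (ℝ × ℝ) :=
  l.map fun t => (t.1 * t.2, t.2 - 1)

@[simp]
lemma rpowSum_nil (w : ℝ) : rpowSum [] w = 0 := rfl

@[simp]
lemma rpowSum_cons (t : ℝ × ℝ) (l : List (ℝ × ℝ)) (w : ℝ) :
    rpowSum (t :: l) w = t.1 * w ^ t.2 + rpowSum l w := rfl

@[simp]
lemma rpowSumDeriv_nil : rpowSumDeriv [] = [] := rfl

@[simp]
lemma rpowSumDeriv_cons (t : ℝ × ℝ) (l : List (ℝ × ℝ)) :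
    rpowSumDeriv (t :: l) = (t.1 * t.2, t.2 - 1) :: rpowSumDeriv l := rfl

lemma hasDerivAt_rpowSum (l : List (ℝ × ℝ)) {x : ℝ} (hx : 0 < x) :
    HasDerivAt (rpowSum l) (rpowSum (rpowSumDeriv l) x) x := by
  induction l with
  | nil => exact hasDerivAt_const x 0
  | cons t l ih =>
    have ht := (Real.hasDerivAt_rpow_const (p := t.2) (Or.inl hx.ne')).const_mul t.1
    have hfun : rpowSum (t :: l) = fun y => t.1 * y ^ t.2 + rpowSum l y := funext fun _ => rfl
    rw [hfun]
    exact (ht.add ih).congr_deriv (by simp only [rpowSumDeriv_cons, rpowSum_cons]; ring)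

lemma continuous_rpowSum {l : List (ℝ × ℝ)} (hl : ∀ t ∈ l, 0 ≤ t.2) :
    Continuous (rpowSum l) := by
  induction l with
  | nil => exact continuous_const
  | cons t l ih =>
    simp only [List.forall_mem_cons] at hl
    exact (continuous_const.mul (Real.continuous_rpow_const hl.1)).add (ih hl.2)

lemma strictConvexOn_rpowSum {l : List (ℝ × ℝ)} (hl : ∀ t ∈ l, 0 ≤ t.2) {a b : ℝ}
    (ha : 0 ≤ a) (h : ∀ x ∈ Ioo a b, 0 < rpowSum (rpowSumDeriv (rpowSumDeriv l)) x) :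
    StrictConvexOn ℝ (Icc a b) (rpowSum l) := by
  refine strictConvexOn_of_deriv2_pos (convex_Icc a b) (continuous_rpowSum hl).continuousOn ?_
  rintro x hx
  rw [interior_Icc] at hx
  have hx0 : 0 < x := ha.trans_lt hx.1
  have hderiv : deriv (rpowSum l) =ᶠ[nhds x] rpowSum (rpowSumDeriv l) :=
    Filter.eventually_of_mem (isOpen_Ioi.mem_nhds hx0) fun y hy => (hasDerivAt_rpowSum l hy).deriv
  rw [Function.iterate_succ_apply, Function.iterate_one, hderiv.deriv_eq,
    (hasDerivAt_rpowSum _ hx0).deriv]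
  exact h x hx

lemma one_add_mul_sub_one_le_rpow_of_nonpos {x p : ℝ} (hx : 0 < x) (hp : p ≤ 0) :
    1 + p * (x - 1) ≤ x ^ p := by
  have hlog : p * (x - 1) ≤ p * Real.log x :=
    mul_le_mul_of_nonpos_left (Real.log_le_sub_one_of_pos hx) hp
  rw [Real.rpow_def_of_pos hx]
  linarith [Real.add_one_le_exp (Real.log x * p), mul_comm p (Real.log x)]

noncomputable def F (m₁ m₂ κ w : ℝ) : ℝ :=
  (m₁ - 1) * m₂ * (1 - w ^ (1 - m₂)) * (w ^ m₁ - κ)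
    - m₁ * (m₂ - 1) * (w ^ m₁ - w) * (1 - κ * w ^ (-m₂))

def expansion (m₁ m₂ κ : ℝ) : List (ℝ × ℝ) :=
  [(m₁ - m₂, m₁), (-((m₁ - 1) * m₂ * κ), 0), (-((m₁ - 1) * m₂), m₁ + 1 - m₂),
    ((m₁ - m₂) * κ, 1 - m₂), (m₁ * (m₂ - 1), 1), (m₁ * (m₂ - 1) * κ, m₁ - m₂)]

section

variable {m₁ m₂ κ : ℝ}

lemma F_eq_rpowSum_expansion (hm₁ : 0 < m₁) (hm₂ : m₂ < 0) {w : ℝ} (hw : 0 ≤ w) :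
    F m₁ m₂ κ w = rpowSum (expansion m₁ m₂ κ) w := by
  have split {p q : ℝ} (h : p + q ≠ 0) : w ^ (p + q) = w ^ p * w ^ q := Real.rpow_add' hw h
  have e₁ : w ^ (1 - m₂) = w * w ^ (-m₂) := by
    rw [sub_eq_add_neg, split (by linarith), Real.rpow_one]
  have e₂ : w ^ (m₁ - m₂) = w ^ m₁ * w ^ (-m₂) := by
    rw [sub_eq_add_neg, split (by linarith)]
  have e₃ : w ^ (m₁ + 1 - m₂) = w ^ m₁ * (w * w ^ (-m₂)) := by
    rw [add_sub_assoc, split (by linarith), e₁]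
  simp only [F, expansion, rpowSum_cons, rpowSum_nil, Real.rpow_zero, Real.rpow_one, e₁, e₂, e₃]
  ring

lemma F_zero (hm₁ : 0 < m₁) (hm₂ : m₂ < 0) : F m₁ m₂ κ 0 = -((m₁ - 1) * m₂ * κ) := by
  simp [F, Real.zero_rpow hm₁.ne', Real.zero_rpow (show 1 - m₂ ≠ 0 by linarith),
    Real.zero_rpow (show -m₂ ≠ 0 by linarith)]

lemma F_neg_of_le_of_lt_one (hm₁ : 1 < m₁) (hm₂ : m₂ < 0) (hκ : 0 < κ) {w : ℝ} (hκw : κ ≤ w)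
    (hw₁ : w < 1) : F m₁ m₂ κ w < 0 := by
  have hw₀ : 0 < w := hκ.trans_le hκw
  set A := (m₁ - 1) * -m₂
  set B := m₁ * (1 - m₂)
  set v := w ^ (-m₂)
  have hA : 0 < A := mul_pos (by linarith) (by linarith)
  have hAB : A < B := by simp only [A, B]; nlinarith
  have hu : w ^ (1 - m₂) = w * v := by
    rw [sub_eq_add_neg, Real.rpow_add hw₀, Real.rpow_one]
  have hgap : 0 < w - w ^ m₁ := by
    have := Real.rpow_lt_rpow_of_exponent_gt hw₀ hw₁ hm₁
    rw [Real.rpow_one] at this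
    linarith
  have hwv : w * v < 1 := hu ▸ Real.rpow_lt_one hw₀.le hw₁ (by linarith)
  have hκv : κ * v ≤ w * v := mul_le_mul_of_nonneg_right hκw (by positivity)
  have key : A * (1 - w * v) * (κ - w ^ m₁) < B * (1 - κ * v) * (w - w ^ m₁) :=
    calc A * (1 - w * v) * (κ - w ^ m₁)
        ≤ A * (1 - w * v) * (w - w ^ m₁) := by gcongr
      _ ≤ A * (1 - κ * v) * (w - w ^ m₁) := by gcongr
      _ < B * (1 - κ * v) * (w - w ^ m₁) := by gcongr; linarith
  simp only [F, hu]
  linarith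

lemma secondDerivFactor_pos (hm₁ : 1 < m₁) (hm₂ : m₂ < 0) (hκ : κ < 1) {x : ℝ} (hx₀ : 0 < x)
    (hxκ : x < κ) :
    0 < m₁ * (m₁ - 1) * x ^ m₂ + (m₁ - 1) * -m₂ * (m₁ + 1 - m₂) * x
      + κ * (1 - m₂) * -m₂ * x ^ (1 - m₁) - m₁ * (1 - m₂) * (m₁ - m₂ - 1) * κ := by
  have : 0 < m₁ := by linarith
  have : 0 < m₁ - 1 := by linarith
  have : 0 < -m₂ := by linarith
  have : 0 < 1 - m₂ := by linarith
  have : 0 < 1 - κ := by linarith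
  have hκ₀ : 0 < κ := hx₀.trans hxκ
  have : 0 < κ - x := by linarith
  have : 0 < m₁ - m₂ * κ := by nlinarith
  have h₁ := one_add_mul_sub_one_le_rpow_of_nonpos hx₀ hm₂.le
  have h₂ := one_add_mul_sub_one_le_rpow_of_nonpos hx₀ (show 1 - m₁ ≤ 0 by linarith)
  have hlower : 0 < m₁ * (m₁ - 1) * (1 + m₂ * (x - 1)) + (m₁ - 1) * -m₂ * (m₁ + 1 - m₂) * x
      + κ * (1 - m₂) * -m₂ * (1 + (1 - m₁) * (x - 1)) - m₁ * (1 - m₂) * (m₁ - m₂ - 1) * κ := by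
    refine pos_of_mul_pos_right ?_ hκ₀.le
    -- `κ` times the lower bound splits into two positive terms.
    have : 0 < (κ - x) * (m₁ * (1 - m₂) * (m₁ - 1) * (1 - κ))
        + x * ((m₁ - 1) * (1 - m₂) * (1 - κ) * (m₁ - m₂ * κ)) := by positivity
    linarith
  have := mul_le_mul_of_nonneg_left h₁ (by positivity : 0 ≤ m₁ * (m₁ - 1))
  have := mul_le_mul_of_nonneg_left h₂ (by positivity : 0 ≤ κ * (1 - m₂) * -m₂)
  linarith

lemma expansion_exponents_nonneg (hm₁ : 0 < m₁) (hm₂ : m₂ < 0) :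
    ∀ t ∈ expansion m₁ m₂ κ, 0 ≤ t.2 := by
  simp only [expansion, List.forall_mem_cons, List.not_mem_nil, IsEmpty.forall_iff,
    implies_true, and_true]
  refine ⟨?_, ?_, ?_, ?_, ?_, ?_⟩ <;> norm_num <;> linarith

lemma continuousOn_F (hm₁ : 0 < m₁) (hm₂ : m₂ < 0) : ContinuousOn (F m₁ m₂ κ) (Ici 0) :=
  (continuous_rpowSum (expansion_exponents_nonneg hm₁ hm₂)).continuousOn.congr fun _ hw =>
    F_eq_rpowSum_expansion hm₁ hm₂ hw

lemma strictConvexOn_F (hm₁ : 1 < m₁) (hm₂ : m₂ < 0) (hκ : κ < 1) :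
    StrictConvexOn ℝ (Icc 0 κ) (F m₁ m₂ κ) := by
  have hexp := expansion_exponents_nonneg (m₁ := m₁) (κ := κ) (by linarith) hm₂
  refine (strictConvexOn_rpowSum hexp le_rfl fun x hx => ?_).congr fun w hw =>
    (F_eq_rpowSum_expansion (by linarith) hm₂ hw.1).symm
  have split {p q : ℝ} (h : p = m₁ - m₂ - 2 + q) : x ^ p = x ^ (m₁ - m₂ - 2) * x ^ q := by
    rw [h, Real.rpow_add hx.1]
  have hfactor : rpowSum (rpowSumDeriv (rpowSumDeriv (expansion m₁ m₂ κ))) x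
      = x ^ (m₁ - m₂ - 2) * ((m₁ - m₂) * (m₁ * (m₁ - 1) * x ^ m₂
        + (m₁ - 1) * -m₂ * (m₁ + 1 - m₂) * x + κ * (1 - m₂) * -m₂ * x ^ (1 - m₁)
        - m₁ * (1 - m₂) * (m₁ - m₂ - 1) * κ)) := by
    simp only [expansion, rpowSumDeriv_cons, rpowSumDeriv_nil, rpowSum_cons, rpowSum_nil,
      sub_self, mul_zero, zero_mul, zero_add, add_zero]
    rw [split (p := m₁ - 1 - 1) (q := m₂) (by ring),
      split (p := m₁ + 1 - m₂ - 1 - 1) (q := 1) (by ring),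
      split (p := 1 - m₂ - 1 - 1) (q := 1 - m₁) (by ring),
      show m₁ - m₂ - 1 - 1 = m₁ - m₂ - 2 by ring, Real.rpow_one]
    ring
  rw [hfactor]
  exact mul_pos (Real.rpow_pos_of_pos hx.1 _)
    (mul_pos (by linarith) (secondDerivFactor_pos hm₁ hm₂ hκ hx.1 hx.2))

end

lemma StrictConvexOn.eq_of_eq_zero_of_lt {s : Set ℝ} {f : ℝ → ℝ} (hf : StrictConvexOn ℝ s f)
    {b : ℝ} (hb : b ∈ s) (hfb : f b < 0) {x y : ℝ} (hx : x ∈ s) (hy : y ∈ s) (hxb : x < b)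
    (hyb : y < b) (hfx : f x = 0) (hfy : f y = 0) : x = y := by
  wlog hxy : x < y generalizing x y
  · rcases (not_lt.1 hxy).lt_or_eq with h | h
    · exact (this hy hx hyb hxb hfy hfx h).symm
    · exact h.symm
  have hlt := hf.lt_on_openSegment hx hb hxb.ne (z := y)
    (by rw [openSegment_eq_Ioo hxb]; exact ⟨hxy, hyb⟩)
  rw [hfx, hfy, max_eq_left hfb.le] at hlt
  exact absurd hlt (lt_irrefl 0)

theorem stmt_6 (m₁ m₂ κ : ℝ) (hm₁ : 1 < m₁) (hm₂ : m₂ < 0)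
    (hκ : κ ∈ Set.Ioo (0:ℝ) 1) :
    (∃! w : ℝ, w ∈ Set.Ioo (0:ℝ) 1 ∧
      (m₁ - 1) * m₂ * (1 - w ^ (1 - m₂)) * (w ^ m₁ - κ)
        - m₁ * (m₂ - 1) * (w ^ m₁ - w) * (1 - κ * w ^ (-m₂)) = 0)
    ∧ ∀ w ∈ Set.Ioo (0:ℝ) 1,
        (m₁ - 1) * m₂ * (1 - w ^ (1 - m₂)) * (w ^ m₁ - κ)
          - m₁ * (m₂ - 1) * (w ^ m₁ - w) * (1 - κ * w ^ (-m₂)) = 0 →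
        w ∈ Set.Ioo (0:ℝ) κ := by
  change (∃! w, w ∈ Ioo 0 1 ∧ F m₁ m₂ κ w = 0) ∧ ∀ w ∈ Ioo 0 1, F m₁ m₂ κ w = 0 → w ∈ Ioo 0 κ
  obtain ⟨hκ₀, hκ₁⟩ := hκ
  have hroots : ∀ w ∈ Ioo (0 : ℝ) 1, F m₁ m₂ κ w = 0 → w ∈ Ioo 0 κ := fun w hw hFw =>
    ⟨hw.1, not_le.1 fun hκw => (F_neg_of_le_of_lt_one hm₁ hm₂ hκ₀ hκw hw.2).ne hFw⟩
  have hFκ : F m₁ m₂ κ κ < 0 := F_neg_of_le_of_lt_one hm₁ hm₂ hκ₀ le_rfl hκ₁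
  have hF₀ : 0 < F m₁ m₂ κ 0 := by
    rw [F_zero (by linarith) hm₂]
    have := mul_pos (mul_pos (sub_pos.2 hm₁) (neg_pos.2 hm₂)) hκ₀
    linarith
  obtain ⟨c, hc, hFc⟩ := intermediate_value_Ioo' hκ₀.le
    ((continuousOn_F (by linarith) hm₂).mono Icc_subset_Ici_self) ⟨hFκ, hF₀⟩
  refine ⟨⟨c, ⟨⟨hc.1, hc.2.trans hκ₁⟩, hFc⟩, fun w ⟨hw, hFw⟩ => ?_⟩, hroots⟩
  have hw' := hroots w hw hFw
  exact (strictConvexOn_F hm₁ hm₂ hκ₁).eq_of_eq_zero_of_lt (right_mem_Icc.2 hκ₀.le) hFκ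
    (Ioo_subset_Icc_self hw') (Ioo_subset_Icc_self hc) hw'.2 hc.2 hFw hFc
end

section
/- Let m₁ > 1, m₂ < 0, b_α > 0, D₁ > 0, D₂ < 0, r > 0, δ > 0, α ≥ 0 with δα < 1, β ≥ 0, and b_β > b_α. Define H(z) = D₁(z/b_α)^{m₁} + D₂(z/b_α)^{m₂} + 1/δ − z/r for z ∈ [b_α, b_β], and suppose H(b_α) = α, H'(b_α) = 0, H(b_β) = −β, H'(b_β) = 0. Define b_m = b_α·(−D₂m₂(m₂−1)/(D₁m₁(m₁−1)))^{1/(m₁−m₂)}. Then H''(b_m) = 0, H'' < 0 on (b_α, b_m), H'' > 0 on (b_m, b_β) (provided b_α < b_m < b_β), and consequently H'(z) < 0 for all z ∈ (b_α, b_β) with H' attaining its minimum at b_m. -/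
/-!
With `A = D₁ m₁ (m₁ - 1) > 0`, the second derivative factors as
`H'' z = A / b² · (z / b) ^ (m₂ - 2) · ((z / b) ^ (m₁ - m₂) - (b_m / b) ^ (m₁ - m₂))`,
so on `z > 0` it has the sign of `z - b_m`. Hence `H'` strictly decreases up to `b_m` and strictly
increases after it; since `H'` vanishes at `b_α` and `b_β`, it is negative in between, with its
minimum at `b_m`.
-/

open Set Filter Topology

theorem hasDerivAt_div_rpow_const {b z : ℝ} (m : ℝ) (hb : b ≠ 0) (hz : z ≠ 0) :
    HasDerivAt (fun z => (z / b) ^ m) (m / b * (z / b) ^ (m - 1)) z := by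
  have h := (Real.hasDerivAt_rpow_const (p := m) (Or.inl (div_ne_zero hz hb))).comp z
    ((hasDerivAt_id z).div_const b)
  exact h.congr_deriv (by ring)

section TwoPowerProfile

variable {H : ℝ → ℝ} {D₁ D₂ m₁ m₂ b c r z : ℝ}

theorem hasDerivAt_of_eq_two_powers
    (hH : ∀ z, H z = D₁ * (z / b) ^ m₁ + D₂ * (z / b) ^ m₂ + c - z / r)
    (hb : b ≠ 0) (hz : z ≠ 0) :
    HasDerivAt H
      (D₁ * (m₁ / b * (z / b) ^ (m₁ - 1)) + D₂ * (m₂ / b * (z / b) ^ (m₂ - 1)) - 1 / r) z := by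
  rw [show H = _ from funext hH]
  exact ((((hasDerivAt_div_rpow_const m₁ hb hz).const_mul D₁).add
    ((hasDerivAt_div_rpow_const m₂ hb hz).const_mul D₂)).add_const c).sub
    ((hasDerivAt_id z).div_const r)

theorem hasDerivAt_deriv_of_eq_two_powers
    (hH : ∀ z, H z = D₁ * (z / b) ^ m₁ + D₂ * (z / b) ^ m₂ + c - z / r)
    (hb : b ≠ 0) (hz : z ≠ 0) :
    HasDerivAt (deriv H) (D₁ * (m₁ * (m₁ - 1) / b ^ 2 * (z / b) ^ (m₁ - 2))
      + D₂ * (m₂ * (m₂ - 1) / b ^ 2 * (z / b) ^ (m₂ - 2))) z := by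
  have hderiv : deriv H =ᶠ[𝓝 z] fun z =>
      D₁ * (m₁ / b * (z / b) ^ (m₁ - 1)) + D₂ * (m₂ / b * (z / b) ^ (m₂ - 1)) - 1 / r :=
    eventually_of_mem (isOpen_ne.mem_nhds hz) fun x hx =>
      (hasDerivAt_of_eq_two_powers hH hb hx).deriv
  have h := (((hasDerivAt_div_rpow_const (m₁ - 1) hb hz).const_mul (m₁ / b)).const_mul D₁).add
    (((hasDerivAt_div_rpow_const (m₂ - 1) hb hz).const_mul (m₂ / b)).const_mul D₂)
  refine ((h.sub_const (1 / r)).congr_of_eventuallyEq hderiv).congr_deriv ?_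
  ring_nf

noncomputable def inflectionPoint (D₁ D₂ m₁ m₂ b : ℝ) : ℝ :=
  b * (-D₂ * m₂ * (m₂ - 1) / (D₁ * m₁ * (m₁ - 1))) ^ (1 / (m₁ - m₂))

theorem inflectionPoint_pos (hb : 0 < b) (hA : 0 < D₁ * m₁ * (m₁ - 1))
    (hB : D₂ * m₂ * (m₂ - 1) < 0) : 0 < inflectionPoint D₁ D₂ m₁ m₂ b := by
  unfold inflectionPoint
  have : 0 < -D₂ * m₂ * (m₂ - 1) / (D₁ * m₁ * (m₁ - 1)) := div_pos (by linarith) hA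
  positivity

theorem deriv_deriv_eq_mul_sub
    (hH : ∀ z, H z = D₁ * (z / b) ^ m₁ + D₂ * (z / b) ^ m₂ + c - z / r)
    (hb : 0 < b) (hA : 0 < D₁ * m₁ * (m₁ - 1)) (hB : D₂ * m₂ * (m₂ - 1) < 0) (hm : m₂ < m₁)
    (hz : 0 < z) :
    deriv (deriv H) z = D₁ * m₁ * (m₁ - 1) / b ^ 2 * (z / b) ^ (m₂ - 2) *
      ((z / b) ^ (m₁ - m₂) - (inflectionPoint D₁ D₂ m₁ m₂ b / b) ^ (m₁ - m₂)) := by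
  have hzb : 0 < z / b := div_pos hz hb
  have hbm : D₁ * m₁ * (m₁ - 1) * (inflectionPoint D₁ D₂ m₁ m₂ b / b) ^ (m₁ - m₂)
      = -D₂ * m₂ * (m₂ - 1) := by
    rw [inflectionPoint, mul_div_cancel_left₀ _ hb.ne', ← Real.rpow_mul
      (div_pos (by linarith) hA).le, one_div_mul_cancel (sub_ne_zero.2 hm.ne'), Real.rpow_one,
      mul_div_cancel₀ _ hA.ne']
  have hsplit : (z / b) ^ (m₁ - 2) = (z / b) ^ (m₂ - 2) * (z / b) ^ (m₁ - m₂) := by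
    rw [← Real.rpow_add hzb]; ring_nf
  rw [(hasDerivAt_deriv_of_eq_two_powers hH hb.ne' hz.ne').deriv, hsplit]
  linear_combination (z / b) ^ (m₂ - 2) / b ^ 2 * hbm

theorem deriv_deriv_inflectionPoint
    (hH : ∀ z, H z = D₁ * (z / b) ^ m₁ + D₂ * (z / b) ^ m₂ + c - z / r)
    (hb : 0 < b) (hA : 0 < D₁ * m₁ * (m₁ - 1)) (hB : D₂ * m₂ * (m₂ - 1) < 0) (hm : m₂ < m₁) :
    deriv (deriv H) (inflectionPoint D₁ D₂ m₁ m₂ b) = 0 := by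
  rw [deriv_deriv_eq_mul_sub hH hb hA hB hm (inflectionPoint_pos hb hA hB), sub_self, mul_zero]

theorem deriv_deriv_neg_of_lt_inflectionPoint
    (hH : ∀ z, H z = D₁ * (z / b) ^ m₁ + D₂ * (z / b) ^ m₂ + c - z / r)
    (hb : 0 < b) (hA : 0 < D₁ * m₁ * (m₁ - 1)) (hB : D₂ * m₂ * (m₂ - 1) < 0) (hm : m₂ < m₁)
    (hz : 0 < z) (hzm : z < inflectionPoint D₁ D₂ m₁ m₂ b) :
    deriv (deriv H) z < 0 := by
  rw [deriv_deriv_eq_mul_sub hH hb hA hB hm hz]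
  refine mul_neg_of_pos_of_neg
    (mul_pos (div_pos hA (by positivity)) (Real.rpow_pos_of_pos (div_pos hz hb) _)) (sub_neg.2 ?_)
  exact Real.rpow_lt_rpow (div_pos hz hb).le (div_lt_div_of_pos_right hzm hb) (sub_pos.2 hm)

theorem deriv_deriv_pos_of_inflectionPoint_lt
    (hH : ∀ z, H z = D₁ * (z / b) ^ m₁ + D₂ * (z / b) ^ m₂ + c - z / r)
    (hb : 0 < b) (hA : 0 < D₁ * m₁ * (m₁ - 1)) (hB : D₂ * m₂ * (m₂ - 1) < 0) (hm : m₂ < m₁)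
    (hzm : inflectionPoint D₁ D₂ m₁ m₂ b < z) :
    0 < deriv (deriv H) z := by
  have hbm := inflectionPoint_pos hb hA hB
  rw [deriv_deriv_eq_mul_sub hH hb hA hB hm (hbm.trans hzm)]
  refine mul_pos (mul_pos (div_pos hA (by positivity))
    (Real.rpow_pos_of_pos (div_pos (hbm.trans hzm) hb) _)) (sub_pos.2 ?_)
  exact Real.rpow_lt_rpow (div_pos hbm hb).le (div_lt_div_of_pos_right hzm hb) (sub_pos.2 hm)

theorem strictAntiOn_deriv_Ioc_inflectionPoint
    (hH : ∀ z, H z = D₁ * (z / b) ^ m₁ + D₂ * (z / b) ^ m₂ + c - z / r)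
    (hb : 0 < b) (hA : 0 < D₁ * m₁ * (m₁ - 1)) (hB : D₂ * m₂ * (m₂ - 1) < 0) (hm : m₂ < m₁) :
    StrictAntiOn (deriv H) (Ioc 0 (inflectionPoint D₁ D₂ m₁ m₂ b)) := by
  refine strictAntiOn_of_deriv_neg (convex_Ioc _ _) (fun x hx => ?_) fun x hx => ?_
  · exact (hasDerivAt_deriv_of_eq_two_powers hH hb.ne' hx.1.ne').continuousAt.continuousWithinAt
  · rw [interior_Ioc] at hx
    exact deriv_deriv_neg_of_lt_inflectionPoint hH hb hA hB hm hx.1 hx.2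

theorem strictMonoOn_deriv_Ici_inflectionPoint
    (hH : ∀ z, H z = D₁ * (z / b) ^ m₁ + D₂ * (z / b) ^ m₂ + c - z / r)
    (hb : 0 < b) (hA : 0 < D₁ * m₁ * (m₁ - 1)) (hB : D₂ * m₂ * (m₂ - 1) < 0) (hm : m₂ < m₁) :
    StrictMonoOn (deriv H) (Ici (inflectionPoint D₁ D₂ m₁ m₂ b)) := by
  have hbm := inflectionPoint_pos hb hA hB
  refine strictMonoOn_of_deriv_pos (convex_Ici _) (fun x hx => ?_) fun x hx => ?_
  · exact (hasDerivAt_deriv_of_eq_two_powers hH hb.ne'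
      (hbm.trans_le hx).ne').continuousAt.continuousWithinAt
  · rw [interior_Ici] at hx
    exact deriv_deriv_pos_of_inflectionPoint_lt hH hb hA hB hm hx

end TwoPowerProfile

section Valley

variable {f : ℝ → ℝ} {a m b : ℝ}

theorem neg_of_strictAntiOn_of_strictMonoOn (hanti : StrictAntiOn f (Icc a m))
    (hmono : StrictMonoOn f (Icc m b)) (ha : f a ≤ 0) (hb : f b ≤ 0) :
    ∀ z ∈ Ioo a b, f z < 0 := by
  intro z ⟨haz, hzb⟩
  rcases le_or_gt z m with hzm | hmz
  · exact (hanti ⟨le_rfl, haz.le.trans hzm⟩ ⟨haz.le, hzm⟩ haz).trans_le ha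
  · exact (hmono ⟨hmz.le, hzb.le⟩ ⟨hmz.le.trans hzb.le, le_rfl⟩ hzb).trans_le hb

theorem isMinOn_of_antitoneOn_of_monotoneOn (hanti : AntitoneOn f (Icc a m))
    (hmono : MonotoneOn f (Icc m b)) : IsMinOn f (Icc a b) m := by
  intro z ⟨haz, hzb⟩
  rcases le_or_gt z m with hzm | hmz
  · exact hanti ⟨haz, hzm⟩ ⟨haz.trans hzm, le_rfl⟩ hzm
  · exact hmono ⟨le_rfl, hmz.le.trans hzb⟩ ⟨hmz.le, hzb⟩ hmz.le

end Valley

theorem stmt_11_general (m₁ m₂ bα bβ D₁ D₂ r δ : ℝ)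
    (hm₁ : 1 < m₁) (hm₂ : m₂ < 0) (hbα : 0 < bα) (hD₁ : 0 < D₁) (hD₂ : D₂ < 0)
    (H : ℝ → ℝ)
    (hH : ∀ z, H z = D₁ * (z / bα) ^ m₁ + D₂ * (z / bα) ^ m₂ + 1 / δ - z / r)
    (hH'a : deriv H bα = 0) (hH'b : deriv H bβ = 0)
    (bm : ℝ)
    (hbm : bm = bα * (-D₂ * m₂ * (m₂ - 1) / (D₁ * m₁ * (m₁ - 1))) ^ (1 / (m₁ - m₂)))
    (hbmem : bα < bm ∧ bm < bβ) :
    deriv (deriv H) bm = 0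
    ∧ (∀ z ∈ Set.Ioo bα bm, deriv (deriv H) z < 0)
    ∧ (∀ z ∈ Set.Ioo bm bβ, 0 < deriv (deriv H) z)
    ∧ (∀ z ∈ Set.Ioo bα bβ, deriv H z < 0)
    ∧ (∀ z ∈ Set.Ioo bα bβ, deriv H bm ≤ deriv H z) := by
  change bm = inflectionPoint D₁ D₂ m₁ m₂ bα at hbm
  subst hbm
  have hA : 0 < D₁ * m₁ * (m₁ - 1) := by have := sub_pos.2 hm₁; positivity
  have hB : D₂ * m₂ * (m₂ - 1) < 0 :=
    mul_neg_of_pos_of_neg (mul_pos_of_neg_of_neg hD₂ hm₂) (by linarith)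
  have hm : m₂ < m₁ := by linarith
  have hanti := (strictAntiOn_deriv_Ioc_inflectionPoint hH hbα hA hB hm).mono
    (Icc_subset_Ioc hbα le_rfl)
  have hmono : StrictMonoOn (deriv H) (Icc _ bβ) :=
    (strictMonoOn_deriv_Ici_inflectionPoint hH hbα hA hB hm).mono Icc_subset_Ici_self
  refine ⟨deriv_deriv_inflectionPoint hH hbα hA hB hm,
    fun z hz => deriv_deriv_neg_of_lt_inflectionPoint hH hbα hA hB hm (hbα.trans hz.1) hz.2,
    fun z hz => deriv_deriv_pos_of_inflectionPoint_lt hH hbα hA hB hm hz.1,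
    neg_of_strictAntiOn_of_strictMonoOn hanti hmono hH'a.le hH'b.le,
    fun z hz => isMinOn_of_antitoneOn_of_monotoneOn hanti.antitoneOn hmono.monotoneOn
      (Ioo_subset_Icc_self hz)⟩

theorem stmt_11 (m₁ m₂ bα bβ D₁ D₂ r δ α β : ℝ)
    (hm₁ : 1 < m₁) (hm₂ : m₂ < 0) (hbα : 0 < bα) (hD₁ : 0 < D₁) (hD₂ : D₂ < 0)
    (hr : 0 < r) (hδ : 0 < δ) (hα : 0 ≤ α) (hδα : δ * α < 1) (hβ : 0 ≤ β)
    (hbb : bα < bβ)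
    (H : ℝ → ℝ)
    (hH : ∀ z, H z = D₁ * (z / bα) ^ m₁ + D₂ * (z / bα) ^ m₂ + 1 / δ - z / r)
    (hHa : H bα = α) (hH'a : deriv H bα = 0) (hHb : H bβ = -β) (hH'b : deriv H bβ = 0)
    (bm : ℝ)
    (hbm : bm = bα * (-D₂ * m₂ * (m₂ - 1) / (D₁ * m₁ * (m₁ - 1))) ^ (1 / (m₁ - m₂)))
    (hbmem : bα < bm ∧ bm < bβ) :
    deriv (deriv H) bm = 0
    ∧ (∀ z ∈ Set.Ioo bα bm, deriv (deriv H) z < 0)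
    ∧ (∀ z ∈ Set.Ioo bm bβ, 0 < deriv (deriv H) z)
    ∧ (∀ z ∈ Set.Ioo bα bβ, deriv H z < 0)
    ∧ (∀ z ∈ Set.Ioo bα bβ, deriv H bm ≤ deriv H z) :=
  stmt_11_general m₁ m₂ bα bβ D₁ D₂ r δ hm₁ hm₂ hbα hD₁ hD₂ H hH hH'a hH'b bm hbm hbmem
end

section
/- Let θ ≠ 0, δ > 0, r > 0, γ > 0 with γ ≠ 1, and suppose K := r + (δ−r)/γ + ((γ−1)/(2γ²))θ² > 0. Let m₁ > 1 and m₂ < 0 be the roots of (θ²/2)m² + (δ−r−θ²/2)m − δ = 0. Then m₂ < −(1−γ)/γ < m₁. -/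
/-! The quadratic `q(m) = θ²/2 m² + (δ - r - θ²/2) m - δ` takes the value `-K` at
`m = -(1 - γ)/γ`. Since `q` opens upwards, it is negative exactly strictly between its roots,
so `K > 0` places `-(1 - γ)/γ` between `m₂` and `m₁`. -/

section Quadratic

variable {𝕜 : Type*} [Field 𝕜] {a b c x y : 𝕜}

theorem quadratic_eq_mul_sub_mul_sub (hxy : x ≠ y) (hx : a * x ^ 2 + b * x + c = 0)
    (hy : a * y ^ 2 + b * y + c = 0) (z : 𝕜) :
    a * z ^ 2 + b * z + c = a * (z - x) * (z - y) := by
  have hsum : a * (x + y) + b = 0 := by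
    have h : (x - y) * (a * (x + y) + b) = 0 := by linear_combination hx - hy
    exact (mul_eq_zero.1 h).resolve_left (sub_ne_zero.2 hxy)
  linear_combination (z - x) * hsum + hx

theorem mem_Ioo_of_quadratic_neg [LinearOrder 𝕜] [IsStrictOrderedRing 𝕜] (ha : 0 < a)
    (hyx : y < x) (hx : a * x ^ 2 + b * x + c = 0) (hy : a * y ^ 2 + b * y + c = 0) {z : 𝕜}
    (hz : a * z ^ 2 + b * z + c < 0) : z ∈ Set.Ioo y x := by
  rw [quadratic_eq_mul_sub_mul_sub hyx.ne' hx hy, mul_assoc] at hz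
  rcases mul_neg_iff.1 (neg_of_mul_neg_right hz ha.le) with ⟨hxz, hzy⟩ | ⟨hzx, hyz⟩
  · linarith
  · exact ⟨sub_pos.1 hyz, sub_neg.1 hzx⟩

end Quadratic

theorem quadratic_at_neg_one_sub_div_eq {θ δ r γ : ℝ} (hγ : γ ≠ 0) :
    θ ^ 2 / 2 * (-(1 - γ) / γ) ^ 2 + (δ - r - θ ^ 2 / 2) * (-(1 - γ) / γ) - δ
      = -(r + (δ - r) / γ + (γ - 1) / (2 * γ ^ 2) * θ ^ 2) := by
  field_simp
  ring

theorem stmt_17_general (θ δ r γ m₁ m₂ : ℝ) (hθ : θ ≠ 0)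
    (hγ : 0 < γ)
    (hK : 0 < r + (δ - r) / γ + (γ - 1) / (2 * γ ^ 2) * θ ^ 2)
    (hm₁ : 1 < m₁) (hm₂ : m₂ < 0)
    (hq₁ : θ ^ 2 / 2 * m₁ ^ 2 + (δ - r - θ ^ 2 / 2) * m₁ - δ = 0)
    (hq₂ : θ ^ 2 / 2 * m₂ ^ 2 + (δ - r - θ ^ 2 / 2) * m₂ - δ = 0) :
    m₂ < -(1 - γ) / γ ∧ -(1 - γ) / γ < m₁ := by
  have hq : θ ^ 2 / 2 * (-(1 - γ) / γ) ^ 2 + (δ - r - θ ^ 2 / 2) * (-(1 - γ) / γ) - δ < 0 := by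
    rw [quadratic_at_neg_one_sub_div_eq hγ.ne']
    exact neg_neg_of_pos hK
  simp only [sub_eq_add_neg] at hq₁ hq₂ hq
  exact mem_Ioo_of_quadratic_neg (by positivity) (by linarith) hq₁ hq₂ hq

theorem stmt_17 (θ δ r γ m₁ m₂ : ℝ) (hθ : θ ≠ 0) (hδ : 0 < δ) (hr : 0 < r)
    (hγ : 0 < γ) (hγ1 : γ ≠ 1)
    (hK : 0 < r + (δ - r) / γ + (γ - 1) / (2 * γ ^ 2) * θ ^ 2)
    (hm₁ : 1 < m₁) (hm₂ : m₂ < 0)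
    (hq₁ : θ ^ 2 / 2 * m₁ ^ 2 + (δ - r - θ ^ 2 / 2) * m₁ - δ = 0)
    (hq₂ : θ ^ 2 / 2 * m₂ ^ 2 + (δ - r - θ ^ 2 / 2) * m₂ - δ = 0) :
    m₂ < -(1 - γ) / γ ∧ -(1 - γ) / γ < m₁ :=
  stmt_17_general θ δ r γ m₁ m₂ hθ hγ hK hm₁ hm₂ hq₁ hq₂
end
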